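/- arXiv:2503.09530 — 6 statements merged into one kernel-verified Lean document; each statement's English description precedes it below -/
import Mathlib

section
/- The sequence defined by δ₁ = n and δ_{t+1} = (1 - 1/(n-t+1))·(δ_t - 1) for t = 1,…,n has the closed form δ_t = (n+1-t)·(1 + H_{n+1-t} - H_n) for all t ∈ [n], where H_k denotes the k-th harmonic number. -/
open Finset

/- Dividing by the number n + 1 - t of remaining steps turns the recurrence into
δ_{t+1}/(n-t) = δ_t/(n+1-t) - 1/(n+1-t), so δ_t/(n+1-t) = 1 - (H_n - H_{n+1-t}) telescopes. -/

lemma sum_Icc_one_div_succ (j : ℕ) :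
    ∑ ℓ ∈ Icc 1 (j + 1), (1 : ℝ) / ℓ = ∑ ℓ ∈ Icc 1 j, (1 : ℝ) / ℓ + 1 / ((j : ℝ) + 1) := by
  rw [sum_Icc_succ_top (by omega), Nat.cast_succ]

lemma closedForm_step (j : ℕ) (h c : ℝ) :
    (1 - 1 / ((j : ℝ) + 1)) * (((j : ℝ) + 1) * (1 + (h + 1 / ((j : ℝ) + 1)) - c) - 1)
      = j * (1 + h - c) := by
  field_simp
  ring

theorem stmt_0_general (n : ℕ) (δ : ℕ → ℝ)
    (hδ1 : δ 1 = n)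
    (hrec : ∀ t, 1 ≤ t → t ≤ n →
      δ (t + 1) = (1 - 1 / ((n : ℝ) - t + 1)) * (δ t - 1)) :
    ∀ t, 1 ≤ t → t ≤ n →
      δ t = ((n : ℝ) + 1 - t) *
        (1 + (∑ ℓ ∈ Finset.Icc 1 (n + 1 - t), (1 : ℝ) / ℓ)
           - (∑ ℓ ∈ Finset.Icc 1 n, (1 : ℝ) / ℓ)) := by
  intro t ht
  induction t, ht using Nat.le_induction with
  | base =>
    intro _
    rw [hδ1, Nat.add_sub_cancel]
    push_cast
    ring
  | succ k hk ih =>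
    intro hkn
    obtain ⟨j, rfl⟩ : ∃ j, n = k + j := ⟨n - k, by omega⟩
    rw [hrec k hk (by omega), ih (by omega), show k + j + 1 - k = j + 1 by omega,
      show k + j + 1 - (k + 1) = j by omega, sum_Icc_one_div_succ]
    convert closedForm_step j _ _ using 2 <;> push_cast <;> ring

/-- The sequence δ₁ = n, δ_{t+1} = (1 - 1/(n-t+1))·(δ_t - 1) has closed form
    δ_t = (n+1-t)·(1 + H_{n+1-t} - H_n) for all t ∈ [n]. -/
theorem stmt_0 (n : ℕ) (hn : 1 ≤ n) (δ : ℕ → ℝ)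
    (hδ1 : δ 1 = n)
    (hrec : ∀ t, 1 ≤ t → t ≤ n →
      δ (t + 1) = (1 - 1 / ((n : ℝ) - t + 1)) * (δ t - 1)) :
    ∀ t, 1 ≤ t → t ≤ n →
      δ t = ((n : ℝ) + 1 - t) *
        (1 + (∑ ℓ ∈ Finset.Icc 1 (n + 1 - t), (1 : ℝ) / ℓ)
           - (∑ ℓ ∈ Finset.Icc 1 n, (1 : ℝ) / ℓ)) :=
  stmt_0_general n δ hδ1 hrec
end

section
/- For the death process (Y_t), setting δ_t = E[Y_t] and α_t = Pr[Y_t ≥ 1], the expectations satisfy δ₁ = n and δ_{t+1} = (1 - 1/(n-t+1))·(δ_t - α_t) for all t ∈ [n]. -/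
/-!
On `{Y_t ≥ 1}` the chain loses one particle, and one more on the event `D` of a double drop, so
`δ_{t+1} = δ_t - α_t - Pr[D]`. Splitting `D` along the fibres `{Y_t = y}`, on which a double drop
has probability `(y - 1)/(n - t + 1)`, gives `Pr[D] = E[(Y_t - 1)⁺]/(n - t + 1)`, and
`E[(Y_t - 1)⁺] = δ_t - α_t`.
-/

open MeasureTheory
open scoped ENNReal

def IsDeathStep (a b : ℕ) : Prop :=
  (1 ≤ a → b = a - 1 ∨ b = a - 2) ∧ (a = 0 → b = 0)

theorem IsDeathStep.le {a b : ℕ} (h : IsDeathStep a b) : b ≤ a := by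
  rcases Nat.eq_zero_or_pos a with ha | ha
  · simp [ha, h.2 ha]
  · have := h.1 ha; omega

theorem IsDeathStep.natCast_eq {a b : ℕ} (h : IsDeathStep a b) :
    (b : ℝ) = a - (if 1 ≤ a then 1 else 0) - (if b + 2 = a then 1 else 0) := by
  have : a = 0 ∧ b = 0 ∨ b + 1 = a ∨ b + 2 = a := by
    rcases Nat.eq_zero_or_pos a with ha | ha
    · exact .inl ⟨ha, h.2 ha⟩
    · have := h.1 ha; omega
  rcases this with ⟨rfl, rfl⟩ | rfl | rfl
  · simp
  · simp
  · simp only [Nat.cast_add, Nat.cast_ofNat, le_add_iff_nonneg_left, zero_le, if_true]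
    ring

theorem natCast_sub_one_eq_ite (a : ℕ) : ((a - 1 : ℕ) : ℝ) = a - (if 1 ≤ a then 1 else 0) := by
  split_ifs with h
  · rw [Nat.cast_sub h, Nat.cast_one]
  · simp [Nat.lt_one_iff.mp (not_le.mp h)]

theorem le_of_isDeathStep {Ω : Type*} {n : ℕ} {Y : ℕ → Ω → ℕ} (hY1 : ∀ ω, Y 1 ω = n)
    (hstep : ∀ ω t, 1 ≤ t → t ≤ n → IsDeathStep (Y t ω) (Y (t + 1) ω))
    {t : ℕ} (ht1 : 1 ≤ t) (htn : t ≤ n + 1) (ω : Ω) : Y t ω ≤ n := by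
  induction t, ht1 using Nat.le_induction with
  | base => exact (hY1 ω).le
  | succ s hs ih => exact ((hstep ω s hs (by omega)).le).trans (ih (by omega))

theorem measure_eq_lintegral_of_measure_inter_fiber {Ω α : Type*} [MeasurableSpace Ω]
    [MeasurableSpace α] [MeasurableSingletonClass α] [Countable α] {μ : Measure Ω}
    {f : Ω → α} (hf : Measurable f) {D : Set Ω} {c : α → ℝ≥0∞}
    (h : ∀ a, μ (D ∩ f ⁻¹' {a}) = c a * μ (f ⁻¹' {a})) :
    μ D = ∫⁻ ω, c (f ω) ∂μ := by
  have hfib (a : α) : MeasurableSet (f ⁻¹' {a}) := hf (measurableSet_singleton a)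
  have hsum := tsum_measure_preimage_singleton (μ := μ.restrict D) Set.countable_univ
    (fun a _ => hfib a)
  rw [tsum_univ (f := fun a => μ.restrict D (f ⁻¹' {a})), Set.preimage_univ,
    Measure.restrict_apply_univ] at hsum
  rw [← lintegral_map (measurable_of_countable c) hf, lintegral_countable', ← hsum]
  congr 1 with a
  rw [Measure.restrict_apply (hfib a), Set.inter_comm, h,
    Measure.map_apply hf (measurableSet_singleton a)]

section Integrals

variable {Ω : Type*} [MeasurableSpace Ω] {μ : Measure Ω} {f g : Ω → ℕ}

theorem measurableSet_one_le (hf : Measurable f) : MeasurableSet {ω | 1 ≤ f ω} :=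
  hf measurableSet_Ici

theorem integrable_natCast_pred (hf : Measurable f) (hfi : Integrable (fun ω => (f ω : ℝ)) μ) :
    Integrable (fun ω => ((f ω - 1 : ℕ) : ℝ)) μ :=
  hfi.mono (measurable_from_nat.comp (hf.sub_const 1)).aestronglyMeasurable
    (.of_forall fun ω => by simp [Nat.sub_le (f ω) 1])

variable [IsFiniteMeasure μ]

theorem integrable_natCast_of_le (hf : Measurable f) {N : ℕ} (hN : ∀ ω, f ω ≤ N) :
    Integrable (fun ω => (f ω : ℝ)) μ :=
  .of_bound (measurable_from_nat.comp hf).aestronglyMeasurable N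
    (.of_forall fun ω => by simpa using hN ω)

theorem integrable_indicator_one {s : Set Ω} (hs : MeasurableSet s) :
    Integrable (s.indicator (1 : Ω → ℝ)) μ :=
  (integrable_const 1).indicator hs

theorem integral_natCast_pred (hf : Measurable f) (hfi : Integrable (fun ω => (f ω : ℝ)) μ) :
    ∫ ω, ((f ω - 1 : ℕ) : ℝ) ∂μ = ∫ ω, (f ω : ℝ) ∂μ - μ.real {ω | 1 ≤ f ω} := by
  have hpt (ω : Ω) : ((f ω - 1 : ℕ) : ℝ) = f ω - {ω | 1 ≤ f ω}.indicator 1 ω := by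
    simp [natCast_sub_one_eq_ite, Set.indicator_apply]
  have hA := integrable_indicator_one (μ := μ) (measurableSet_one_le hf)
  simp_rw [hpt]
  rw [integral_sub hfi hA, integral_indicator_one (measurableSet_one_le hf)]

theorem integral_natCast_of_isDeathStep (hf : Measurable f) (hg : Measurable g)
    (hfg : ∀ ω, IsDeathStep (f ω) (g ω)) (hfi : Integrable (fun ω => (f ω : ℝ)) μ) :
    ∫ ω, (g ω : ℝ) ∂μ =
      ∫ ω, (f ω : ℝ) ∂μ - μ.real {ω | 1 ≤ f ω} - μ.real {ω | g ω + 2 = f ω} := by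
  have hD : MeasurableSet {ω | g ω + 2 = f ω} := measurableSet_eq_fun (hg.add_const 2) hf
  have hpt (ω : Ω) : (g ω : ℝ) =
      f ω - {ω | 1 ≤ f ω}.indicator 1 ω - {ω | g ω + 2 = f ω}.indicator 1 ω := by
    simp [(hfg ω).natCast_eq, Set.indicator_apply]
  have hA := integrable_indicator_one (μ := μ) (measurableSet_one_le hf)
  have hfA : Integrable (fun ω => (f ω : ℝ) - {ω | 1 ≤ f ω}.indicator 1 ω) μ := hfi.sub hA
  simp_rw [hpt]
  rw [integral_sub hfA (integrable_indicator_one hD), integral_sub hfi hA,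
    integral_indicator_one (measurableSet_one_le hf), integral_indicator_one hD]

theorem measureReal_add_two_eq {d : ℝ} (hd : 0 ≤ d) (hf : Measurable f)
    (hfi : Integrable (fun ω => (f ω : ℝ)) μ)
    (hprob : ∀ y, 2 ≤ y → μ {ω | f ω = y ∧ g ω = y - 2} =
      ENNReal.ofReal (((y : ℝ) - 1) / d) * μ {ω | f ω = y}) :
    μ.real {ω | g ω + 2 = f ω} = (∫ ω, (f ω : ℝ) ∂μ - μ.real {ω | 1 ≤ f ω}) / d := by
  -- `(y - 1 : ℕ)` truncates, so the fibre weight also vanishes at `y = 0`, where no double drop occurs.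
  have hfib (y : ℕ) : μ ({ω | g ω + 2 = f ω} ∩ f ⁻¹' {y}) =
      ENNReal.ofReal (((y - 1 : ℕ) : ℝ) / d) * μ (f ⁻¹' {y}) := by
    rcases lt_or_ge y 2 with hy | hy
    · have hempty : {ω | g ω + 2 = f ω} ∩ f ⁻¹' {y} = ∅ := by
        ext ω; simp only [Set.mem_inter_iff, Set.mem_ofPred_eq, Set.mem_preimage,
          Set.mem_singleton_iff, Set.mem_empty_iff_false, iff_false]; omega
      simp [hempty, Nat.sub_eq_zero_of_le (Nat.le_of_lt_succ hy)]
    · have hset : {ω | g ω + 2 = f ω} ∩ f ⁻¹' {y} = {ω | f ω = y ∧ g ω = y - 2} := by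
        ext ω; simp only [Set.mem_inter_iff, Set.mem_ofPred_eq, Set.mem_preimage,
          Set.mem_singleton_iff]; omega
      rw [hset, hprob y hy, Nat.cast_sub (by omega), Nat.cast_one]
      rfl
  have hnonneg (ω : Ω) : 0 ≤ ((f ω - 1 : ℕ) : ℝ) / d := div_nonneg (Nat.cast_nonneg _) hd
  rw [measureReal_def, measure_eq_lintegral_of_measure_inter_fiber hf hfib,
    ← ofReal_integral_eq_lintegral_ofReal ((integrable_natCast_pred hf hfi).div_const d)
      (.of_forall hnonneg),
    ENNReal.toReal_ofReal (integral_nonneg hnonneg), integral_div, integral_natCast_pred hf hfi]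

end Integrals

theorem stmt_7_general {Ω : Type*} [MeasurableSpace Ω] (μ : MeasureTheory.Measure Ω)
    [MeasureTheory.IsProbabilityMeasure μ]
    (n : ℕ) (Y : ℕ → Ω → ℕ)
    (hmeas : ∀ t, Measurable (Y t))
    (hY1 : ∀ ω, Y 1 ω = n)
    (hstep : ∀ ω, ∀ t, 1 ≤ t → t ≤ n →
      (1 ≤ Y t ω → Y (t + 1) ω = Y t ω - 1 ∨ Y (t + 1) ω = Y t ω - 2) ∧
      (Y t ω = 0 → Y (t + 1) ω = 0))
    (hprob2 : ∀ t y, 1 ≤ t → t ≤ n → 2 ≤ y →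
      μ {ω | Y t ω = y ∧ Y (t + 1) ω = y - 2} =
        ENNReal.ofReal (((y : ℝ) - 1) / ((n : ℝ) - t + 1)) * μ {ω | Y t ω = y}) :
    (∫ ω, ((Y 1 ω : ℝ)) ∂μ) = n ∧
    ∀ t, 1 ≤ t → t ≤ n →
      (∫ ω, ((Y (t + 1) ω : ℝ)) ∂μ) =
        (1 - 1 / ((n : ℝ) - t + 1)) *
          ((∫ ω, ((Y t ω : ℝ)) ∂μ) - (μ {ω | 1 ≤ Y t ω}).toReal) := by
  refine ⟨by simp [hY1], fun t ht1 htn => ?_⟩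
  have hd : (0 : ℝ) < n - t + 1 := by linarith [(Nat.cast_le.mpr htn : (t : ℝ) ≤ n)]
  have hfi := integrable_natCast_of_le (μ := μ) (hmeas t)
    (le_of_isDeathStep hY1 hstep ht1 (by omega))
  rw [integral_natCast_of_isDeathStep (hmeas t) (hmeas (t + 1)) (hstep · t ht1 htn) hfi,
    measureReal_add_two_eq hd.le (hmeas t) hfi (fun y => hprob2 t y ht1 htn), ← measureReal_def]
  field_simp

/-- For the death process, δ_t = E[Y_t] and α_t = Pr[Y_t ≥ 1] satisfy
    δ₁ = n and δ_{t+1} = (1 - 1/(n-t+1))·(δ_t - α_t) for all t ∈ [n]. -/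
theorem stmt_7 {Ω : Type*} [MeasurableSpace Ω] (μ : MeasureTheory.Measure Ω)
    [MeasureTheory.IsProbabilityMeasure μ]
    (n : ℕ) (hn : 1 ≤ n) (Y : ℕ → Ω → ℕ)
    (hmeas : ∀ t, Measurable (Y t))
    (hY1 : ∀ ω, Y 1 ω = n)
    (hstep : ∀ ω, ∀ t, 1 ≤ t → t ≤ n →
      (1 ≤ Y t ω → Y (t + 1) ω = Y t ω - 1 ∨ Y (t + 1) ω = Y t ω - 2) ∧
      (Y t ω = 0 → Y (t + 1) ω = 0))
    (hprob2 : ∀ t y, 1 ≤ t → t ≤ n → 2 ≤ y →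
      μ {ω | Y t ω = y ∧ Y (t + 1) ω = y - 2} =
        ENNReal.ofReal (((y : ℝ) - 1) / ((n : ℝ) - t + 1)) * μ {ω | Y t ω = y})
    (hprob1 : ∀ t y, 1 ≤ t → t ≤ n → 1 ≤ y →
      μ {ω | Y t ω = y ∧ Y (t + 1) ω = y - 1} =
        ENNReal.ofReal (1 - ((y : ℝ) - 1) / ((n : ℝ) - t + 1)) * μ {ω | Y t ω = y}) :
    (∫ ω, ((Y 1 ω : ℝ)) ∂μ) = n ∧
    ∀ t, 1 ≤ t → t ≤ n →
      (∫ ω, ((Y (t + 1) ω : ℝ)) ∂μ) =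
        (1 - 1 / ((n : ℝ) - t + 1)) *
          ((∫ ω, ((Y t ω : ℝ)) ∂μ) - (μ {ω | 1 ≤ Y t ω}).toReal) :=
  stmt_7_general μ n Y hmeas hY1 hstep hprob2
end

section
/- Consider the LP: maximize ∑_{t=1}^{n} α_t over (α_t) ∈ [0,1]^n subject to δ₁ = n, δ_{t+1} = (1 - 1/(n-t+1))·(δ_t - α_t) for t ∈ [n], and 0 ≤ α_t ≤ min(δ_t, 1) for all t ∈ [n]. Any optimal solution (α_t) satisfies α_t = min(δ_t, 1) for every t ∈ [n]. -/
/-!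
Suppose some `α t₀` stays strictly below its cap `m = min (δ t₀) 1`. Raise it to `m` and multiply
every later `α s` by `λ = (δ t₀ - m) / (δ t₀ - α t₀) ∈ [0, 1)`. Since the recursion for `δ` is
linear, all later `δ s` get multiplied by `λ` as well, so the new solution is feasible. The gain at
`t₀` is `m - α t₀`; the loss afterwards is `(1 - λ) ∑_{s > t₀} α s ≤ (1 - λ) δ (t₀ + 1)
= c t₀ (m - α t₀)`, which is strictly smaller because the factor `c t₀` is below `1`.
-/

open Finset

/-- The LP of the statement is the case `c t = 1 - 1 / (n - t + 1)`, `d = n`. -/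
def IsFeasible (c : ℕ → ℝ) (d : ℝ) (n : ℕ) (α δ : ℕ → ℝ) : Prop :=
  δ 1 = d ∧ (∀ t, 1 ≤ t → t ≤ n → δ (t + 1) = c t * (δ t - α t)) ∧
    ∀ t, 1 ≤ t → t ≤ n → 0 ≤ α t ∧ α t ≤ min (δ t) 1

namespace IsFeasible

variable {c : ℕ → ℝ} {d : ℝ} {n : ℕ} {α δ : ℕ → ℝ}

theorem le_state (h : IsFeasible c d n α δ) {t : ℕ} (h₁ : 1 ≤ t) (hn : t ≤ n) : α t ≤ δ t :=
  (h.2.2 t h₁ hn).2.trans (min_le_left _ _)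

theorem state_succ_nonneg (h : IsFeasible c d n α δ) {t : ℕ} (h₁ : 1 ≤ t) (hn : t ≤ n)
    (hc : 0 ≤ c t) : 0 ≤ δ (t + 1) := by
  rw [h.2.1 t h₁ hn]
  exact mul_nonneg hc (sub_nonneg.2 (h.le_state h₁ hn))

theorem control_add_state_succ_le (h : IsFeasible c d n α δ) {t : ℕ} (h₁ : 1 ≤ t) (hn : t ≤ n)
    (hc : c t ≤ 1) : α t + δ (t + 1) ≤ δ t := by
  have hslack : 0 ≤ δ t - α t := sub_nonneg.2 (h.le_state h₁ hn)
  have : c t * (δ t - α t) ≤ δ t - α t := mul_le_of_le_one_left hslack hc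
  rw [h.2.1 t h₁ hn]
  linarith

theorem sum_Ico_add_state_le (h : IsFeasible c d n α δ) (hc : ∀ t, 1 ≤ t → t ≤ n → c t ≤ 1)
    {a : ℕ} (ha : 1 ≤ a) {b : ℕ} (hab : a ≤ b) (hb : b ≤ n + 1) :
    ∑ s ∈ Ico a b, α s + δ b ≤ δ a := by
  induction b, hab using Nat.le_induction with
  | base => simp
  | succ b hab ih =>
    have hstep :=
      h.control_add_state_succ_le (ha.trans hab) (by omega) (hc b (ha.trans hab) (by omega))
    rw [sum_Ico_succ_top hab]
    linarith [ih (by omega)]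

theorem sum_Ico_le_state (h : IsFeasible c d n α δ) (hc : ∀ t, 1 ≤ t → t ≤ n → c t ∈ Set.Icc 0 1)
    {t₀ : ℕ} (h₁ : 1 ≤ t₀) (hn : t₀ ≤ n) : ∑ s ∈ Ico (t₀ + 1) (n + 1), α s ≤ δ (t₀ + 1) := by
  have hpot := h.sum_Ico_add_state_le (fun t h₁ hn => (hc t h₁ hn).2) (by omega : 1 ≤ t₀ + 1)
    (by omega : t₀ + 1 ≤ n + 1) le_rfl
  have hlast := h.state_succ_nonneg (h₁.trans hn) le_rfl (hc n (h₁.trans hn) le_rfl).1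
  linarith

end IsFeasible

section Raise

variable (t₀ : ℕ) (α δ : ℕ → ℝ)

noncomputable def raiseFactor : ℝ := (δ t₀ - min (δ t₀) 1) / (δ t₀ - α t₀)

noncomputable def raisedControl (s : ℕ) : ℝ :=
  if s < t₀ then α s else if s = t₀ then min (δ t₀) 1 else raiseFactor t₀ α δ * α s

noncomputable def raisedState (s : ℕ) : ℝ :=
  if s ≤ t₀ then δ s else raiseFactor t₀ α δ * δ s

variable {t₀ α δ}

theorem raisedControl_of_lt {s : ℕ} (hs : s < t₀) : raisedControl t₀ α δ s = α s := if_pos hs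

theorem raisedControl_self : raisedControl t₀ α δ t₀ = min (δ t₀) 1 := by
  simp [raisedControl]

theorem raisedControl_of_gt {s : ℕ} (hs : t₀ < s) :
    raisedControl t₀ α δ s = raiseFactor t₀ α δ * α s := by
  simp [raisedControl, hs.ne', hs.not_gt]

theorem raisedState_of_le {s : ℕ} (hs : s ≤ t₀) : raisedState t₀ α δ s = δ s := if_pos hs

theorem raisedState_of_gt {s : ℕ} (hs : t₀ < s) :
    raisedState t₀ α δ s = raiseFactor t₀ α δ * δ s := if_neg hs.not_ge

theorem sum_raisedControl {n : ℕ} (h₁ : 1 ≤ t₀) (hn : t₀ ≤ n) :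
    ∑ s ∈ Icc 1 n, raisedControl t₀ α δ s = ∑ s ∈ Icc 1 n, α s + (min (δ t₀) 1 - α t₀)
      - (1 - raiseFactor t₀ α δ) * ∑ s ∈ Ico (t₀ + 1) (n + 1), α s := by
  have hsplit : ∀ f : ℕ → ℝ, ∑ s ∈ Icc 1 n, f s
      = ∑ s ∈ Ico 1 t₀, f s + f t₀ + ∑ s ∈ Ico (t₀ + 1) (n + 1), f s := fun f => by
    rw [← Ico_add_one_right_eq_Icc, ← sum_Ico_succ_top h₁,
      sum_Ico_consecutive _ (by omega) (by omega)]
  have hbefore : ∑ s ∈ Ico 1 t₀, raisedControl t₀ α δ s = ∑ s ∈ Ico 1 t₀, α s :=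
    sum_congr rfl fun s hs => raisedControl_of_lt (mem_Ico.1 hs).2
  have hafter : ∑ s ∈ Ico (t₀ + 1) (n + 1), raisedControl t₀ α δ s
      = raiseFactor t₀ α δ * ∑ s ∈ Ico (t₀ + 1) (n + 1), α s := by
    rw [mul_sum]
    exact sum_congr rfl fun s hs => raisedControl_of_gt (mem_Ico.1 hs).1
  rw [hsplit, hsplit, hbefore, hafter, raisedControl_self]
  ring

variable {c : ℕ → ℝ} {d : ℝ} {n : ℕ}

theorem IsFeasible.raised (h : IsFeasible c d n α δ) (h₁ : 1 ≤ t₀) (hn : t₀ ≤ n)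
    (hlt : α t₀ < min (δ t₀) 1) : IsFeasible c d n (raisedControl t₀ α δ) (raisedState t₀ α δ) := by
  obtain ⟨hinit, hrec, hbounds⟩ := h
  have hgap : 0 < δ t₀ - α t₀ := sub_pos.2 (hlt.trans_le (min_le_left _ _))
  have hscale₀ : 0 ≤ raiseFactor t₀ α δ := div_nonneg (sub_nonneg.2 (min_le_left _ _)) hgap.le
  have hscale₁ : raiseFactor t₀ α δ ≤ 1 := (div_le_one hgap).2 (by linarith)
  refine ⟨by rw [raisedState_of_le h₁, hinit], fun t ht₁ htn => ?_, fun t ht₁ htn => ?_⟩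
  · rcases lt_trichotomy t t₀ with hlt' | rfl | hgt
    · rw [raisedState_of_le (hlt' : t + 1 ≤ t₀), raisedState_of_le hlt'.le,
        raisedControl_of_lt hlt', hrec t ht₁ htn]
    · rw [raisedState_of_gt (Nat.lt_succ_self t), raisedState_of_le le_rfl, raisedControl_self,
        hrec t ht₁ htn, raiseFactor]
      field_simp
    · rw [raisedState_of_gt (by omega), raisedState_of_gt hgt, raisedControl_of_gt hgt,
        hrec t ht₁ htn]
      ring
  · rcases lt_trichotomy t t₀ with hlt' | rfl | hgt
    · rw [raisedState_of_le hlt'.le, raisedControl_of_lt hlt']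
      exact hbounds t ht₁ htn
    · rw [raisedState_of_le le_rfl, raisedControl_self]
      exact ⟨(hbounds t ht₁ htn).1.trans hlt.le, le_rfl⟩
    · obtain ⟨hα₀, hα⟩ := hbounds t ht₁ htn
      rw [raisedState_of_gt hgt, raisedControl_of_gt hgt]
      refine ⟨mul_nonneg hscale₀ hα₀, le_min ?_ ?_⟩
      · exact mul_le_mul_of_nonneg_left (hα.trans (min_le_left _ _)) hscale₀
      · exact mul_le_one₀ hscale₁ hα₀ (hα.trans (min_le_right _ _))

theorem IsFeasible.sum_lt_sum_raisedControl (h : IsFeasible c d n α δ)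
    (hc : ∀ t, 1 ≤ t → t ≤ n → c t ∈ Set.Ico 0 1) (h₁ : 1 ≤ t₀) (hn : t₀ ≤ n)
    (hlt : α t₀ < min (δ t₀) 1) :
    ∑ s ∈ Icc 1 n, α s < ∑ s ∈ Icc 1 n, raisedControl t₀ α δ s := by
  set m := min (δ t₀) 1
  set scale := raiseFactor t₀ α δ
  have hgap : 0 < δ t₀ - α t₀ := sub_pos.2 (hlt.trans_le (min_le_left _ _))
  have hloss : (1 - scale) * δ (t₀ + 1) = c t₀ * (m - α t₀) := by
    rw [h.2.1 t₀ h₁ hn]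
    simp only [scale, raiseFactor]
    field_simp
    ring
  have hscale : 0 ≤ 1 - scale := sub_nonneg.2 ((div_le_one hgap).2 (by linarith))
  have htail : (1 - scale) * ∑ s ∈ Ico (t₀ + 1) (n + 1), α s ≤ c t₀ * (m - α t₀) :=
    hloss ▸ mul_le_mul_of_nonneg_left
      (h.sum_Ico_le_state (fun t h₁ hn => Set.Ico_subset_Icc_self (hc t h₁ hn)) h₁ hn) hscale
  have hgain : c t₀ * (m - α t₀) < m - α t₀ :=
    mul_lt_of_lt_one_left (sub_pos.2 hlt) (hc t₀ h₁ hn).2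
  rw [sum_raisedControl h₁ hn]
  linarith

theorem IsFeasible.eq_min_of_forall_sum_le (h : IsFeasible c d n α δ)
    (hc : ∀ t, 1 ≤ t → t ≤ n → c t ∈ Set.Ico 0 1)
    (hopt : ∀ β δ', IsFeasible c d n β δ' → ∑ t ∈ Icc 1 n, β t ≤ ∑ t ∈ Icc 1 n, α t)
    {t : ℕ} (h₁ : 1 ≤ t) (hn : t ≤ n) : α t = min (δ t) 1 := by
  by_contra hne
  have hlt : α t < min (δ t) 1 := lt_of_le_of_ne (h.2.2 t h₁ hn).2 hne
  exact (h.sum_lt_sum_raisedControl hc h₁ hn hlt).not_ge (hopt _ _ (h.raised h₁ hn hlt))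

end Raise

theorem one_sub_one_div_mem_Ico {n t : ℕ} (hn : t ≤ n) :
    1 - 1 / ((n : ℝ) - t + 1) ∈ Set.Ico 0 1 := by
  have hden : (1 : ℝ) ≤ (n : ℝ) - t + 1 := by
    have : (t : ℝ) ≤ n := by exact_mod_cast hn
    linarith
  exact ⟨sub_nonneg.2 ((div_le_one (by linarith)).2 hden),
    sub_lt_self _ (one_div_pos.2 (by linarith))⟩

theorem stmt_10_general (n : ℕ) (α δ : ℕ → ℝ)
    (hδ1 : δ 1 = n)
    (hrec : ∀ t, 1 ≤ t → t ≤ n →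
      δ (t + 1) = (1 - 1 / ((n : ℝ) - t + 1)) * (δ t - α t))
    (hfeas : ∀ t, 1 ≤ t → t ≤ n → 0 ≤ α t ∧ α t ≤ min (δ t) 1)
    (hopt : ∀ β δ' : ℕ → ℝ, δ' 1 = n →
      (∀ t, 1 ≤ t → t ≤ n →
        δ' (t + 1) = (1 - 1 / ((n : ℝ) - t + 1)) * (δ' t - β t)) →
      (∀ t, 1 ≤ t → t ≤ n → 0 ≤ β t ∧ β t ≤ min (δ' t) 1) →
      ∑ t ∈ Finset.Icc 1 n, β t ≤ ∑ t ∈ Finset.Icc 1 n, α t) :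
    ∀ t, 1 ≤ t → t ≤ n → α t = min (δ t) 1 := fun _ h₁ hn =>
  IsFeasible.eq_min_of_forall_sum_le (c := fun t => 1 - 1 / ((n : ℝ) - t + 1)) ⟨hδ1, hrec, hfeas⟩
    (fun _ _ => one_sub_one_div_mem_Ico) (fun β δ' h' => hopt β δ' h'.1 h'.2.1 h'.2.2) h₁ hn

/-- Any optimal solution of the factor-revealing LP satisfies
    α_t = min(δ_t, 1) for every t ∈ [n]. -/
theorem stmt_10 (n : ℕ) (hn : 1 ≤ n) (α δ : ℕ → ℝ)
    (hδ1 : δ 1 = n)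
    (hrec : ∀ t, 1 ≤ t → t ≤ n →
      δ (t + 1) = (1 - 1 / ((n : ℝ) - t + 1)) * (δ t - α t))
    (hfeas : ∀ t, 1 ≤ t → t ≤ n → 0 ≤ α t ∧ α t ≤ min (δ t) 1)
    (hopt : ∀ β δ' : ℕ → ℝ, δ' 1 = n →
      (∀ t, 1 ≤ t → t ≤ n →
        δ' (t + 1) = (1 - 1 / ((n : ℝ) - t + 1)) * (δ' t - β t)) →
      (∀ t, 1 ≤ t → t ≤ n → 0 ≤ β t ∧ β t ≤ min (δ' t) 1) →
      ∑ t ∈ Finset.Icc 1 n, β t ≤ ∑ t ∈ Finset.Icc 1 n, α t) :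
    ∀ t, 1 ≤ t → t ≤ n → α t = min (δ t) 1 :=
  stmt_10_general n α δ hδ1 hrec hfeas hopt
end

section
/- In the LP from the KVV correction, if (α_t) is feasible with δ_{t+1} = (1 - 1/(n-t+1))·(δ_t - α_t) and α_ℓ < min(δ_ℓ, 1) for some ℓ < n with α_{ℓ+1} > 0, then the modified solution α'_ℓ = α_ℓ + ε, α'_{ℓ+1} = α_{ℓ+1} - ε·(1 - 1/(n-ℓ+1)) (with ε = min(min(δ_ℓ,1) - α_ℓ, α_{ℓ+1}/(1 - 1/(n-ℓ+1))) and all other coordinates unchanged) is feasible and has objective value strictly larger, increased by exactly ε/(n-ℓ+1). -/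
/-!
Raising `α ℓ` by `ε` lowers `δ (ℓ + 1)` by `ε * c ℓ`, where `c ℓ = 1 - 1 / (n - ℓ + 1)`. Lowering
`α (ℓ + 1)` by the same amount makes `δ (ℓ + 1) - α (ℓ + 1)`, and hence all later `δ t`,
unchanged, so only the constraints at `ℓ` and `ℓ + 1` are affected. The choice of `ε` keeps
them satisfied, and the objective changes by `ε - ε * c ℓ = ε / (n - ℓ + 1)`.
-/

namespace KVV

variable {R : Type*} [CommRing R]

def exchange (α : ℕ → R) (ℓ : ℕ) (ε κ : R) : ℕ → R := fun t =>
  if t = ℓ then α ℓ + ε else if t = ℓ + 1 then α (ℓ + 1) - ε * κ else α t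

theorem exchange_apply (α : ℕ → R) (ℓ : ℕ) (ε κ : R) (t : ℕ) :
    exchange α ℓ ε κ t =
      α t + (if t = ℓ then ε else 0) - (if t = ℓ + 1 then ε * κ else 0) := by
  unfold exchange
  split_ifs <;> first | omega | (subst_vars; ring)

theorem sum_exchange {s : Finset ℕ} {ℓ : ℕ} (hℓ : ℓ ∈ s) (hℓ' : ℓ + 1 ∈ s)
    (α : ℕ → R) (ε κ : R) :
    ∑ t ∈ s, exchange α ℓ ε κ t = ∑ t ∈ s, α t + ε * (1 - κ) := by
  simp only [exchange_apply, Finset.sum_sub_distrib, Finset.sum_add_distrib,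
    Finset.sum_ite_eq', if_pos hℓ, if_pos hℓ']
  ring

theorem exchange_recursion {c α δ δ' : ℕ → R} {n ℓ : ℕ} {ε : R} (hℓ : 1 ≤ ℓ)
    (hδ : ∀ t, 1 ≤ t → t ≤ n → δ (t + 1) = c t * (δ t - α t))
    (hδ' : ∀ t, 1 ≤ t → t ≤ n → δ' (t + 1) = c t * (δ' t - exchange α ℓ ε (c ℓ) t))
    (h1 : δ' 1 = δ 1) :
    ∀ t, 1 ≤ t → t ≤ n + 1 → δ' t = δ t - if t = ℓ + 1 then ε * c ℓ else 0 := by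
  intro t ht
  induction t, ht using Nat.le_induction with
  | base => intro; rw [h1, if_neg (by omega), sub_zero]
  | succ t ht ih =>
    intro htn
    rw [hδ' t ht (by omega), hδ t ht (by omega), ih (by omega)]
    unfold exchange
    split_ifs <;> first | omega | (subst_vars; ring)

theorem exchange_feasible [LinearOrder R] [IsStrictOrderedRing R] {α δ δ' : ℕ → R} {n ℓ : ℕ}
    {ε κ : R} (hfeas : ∀ t, 1 ≤ t → t ≤ n → 0 ≤ α t ∧ α t ≤ min (δ t) 1)
    (hε : 0 ≤ ε) (hκ : 0 ≤ κ) (hεℓ : ε ≤ min (δ ℓ) 1 - α ℓ) (hεκ : ε * κ ≤ α (ℓ + 1))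
    (hδ' : ∀ t, 1 ≤ t → t ≤ n → δ' t = δ t - if t = ℓ + 1 then ε * κ else 0) :
    ∀ t, 1 ≤ t → t ≤ n → 0 ≤ exchange α ℓ ε κ t ∧ exchange α ℓ ε κ t ≤ min (δ' t) 1 := by
  intro t ht htn
  obtain ⟨h0, hδt, h1⟩ : 0 ≤ α t ∧ α t ≤ δ t ∧ α t ≤ 1 := by
    simpa only [le_min_iff] using hfeas t ht htn
  have hεκ0 : 0 ≤ ε * κ := mul_nonneg hε hκ
  rw [hδ' t ht htn, le_min_iff]
  rcases eq_or_ne t ℓ with rfl | hℓ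
  · have := min_le_left (δ t) 1
    have := min_le_right (δ t) 1
    simp only [exchange, if_true, if_neg (by omega : t ≠ t + 1), sub_zero]
    exact ⟨by linarith, by linarith, by linarith⟩
  rcases eq_or_ne t (ℓ + 1) with rfl | hℓ'
  · simp only [exchange, if_neg hℓ, if_true]
    exact ⟨by linarith, by linarith, by linarith⟩
  · simp only [exchange, if_neg hℓ, if_neg hℓ', sub_zero]
    exact ⟨h0, hδt, h1⟩

end KVV

theorem stmt_11_general (n ℓ : ℕ) (hℓ1 : 1 ≤ ℓ) (hℓn : ℓ < n)
    (α δ : ℕ → ℝ) (hδ1 : δ 1 = n)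
    (hrec : ∀ t, 1 ≤ t → t ≤ n →
      δ (t + 1) = (1 - 1 / ((n : ℝ) - t + 1)) * (δ t - α t))
    (hfeas : ∀ t, 1 ≤ t → t ≤ n → 0 ≤ α t ∧ α t ≤ min (δ t) 1)
    (ε : ℝ)
    (hε : ε = min (min (δ ℓ) 1 - α ℓ)
      (α (ℓ + 1) / (1 - 1 / ((n : ℝ) - ℓ + 1))))
    (α' : ℕ → ℝ)
    (hα' : α' = fun t => if t = ℓ then α ℓ + ε
      else if t = ℓ + 1 then α (ℓ + 1) - ε * (1 - 1 / ((n : ℝ) - ℓ + 1))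
      else α t)
    (δ' : ℕ → ℝ) (hδ'1 : δ' 1 = n)
    (hrec' : ∀ t, 1 ≤ t → t ≤ n →
      δ' (t + 1) = (1 - 1 / ((n : ℝ) - t + 1)) * (δ' t - α' t)) :
    (∀ t, 1 ≤ t → t ≤ n → 0 ≤ α' t ∧ α' t ≤ min (δ' t) 1) ∧
    ∑ t ∈ Finset.Icc 1 n, α' t =
      (∑ t ∈ Finset.Icc 1 n, α t) + ε / ((n : ℝ) - ℓ + 1) := by
  change α' = KVV.exchange α ℓ ε (1 - 1 / ((n : ℝ) - ℓ + 1)) at hα'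
  subst hα'
  have hκ : 0 < 1 - 1 / ((n : ℝ) - ℓ + 1) := by
    have : (ℓ : ℝ) + 1 ≤ n := by exact_mod_cast hℓn
    exact sub_pos.2 ((div_lt_one (by linarith)).2 (by linarith))
  have hε0 : 0 ≤ ε := hε ▸ le_min (sub_nonneg.2 (hfeas ℓ hℓ1 hℓn.le).2)
    (div_nonneg (hfeas (ℓ + 1) (by omega) hℓn).1 hκ.le)
  have hεκ : ε * (1 - 1 / ((n : ℝ) - ℓ + 1)) ≤ α (ℓ + 1) :=
    (le_div_iff₀ hκ).1 (hε ▸ min_le_right _ _)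
  have hδ' := KVV.exchange_recursion hℓ1 hrec hrec' (hδ'1.trans hδ1.symm)
  refine ⟨KVV.exchange_feasible hfeas hε0 hκ.le (hε ▸ min_le_left _ _) hεκ
    fun t ht htn => hδ' t ht (by omega), ?_⟩
  rw [KVV.sum_exchange (Finset.mem_Icc.2 ⟨hℓ1, hℓn.le⟩) (Finset.mem_Icc.2 ⟨by omega, hℓn⟩)]
  ring

/-- Exchange argument: increasing α_ℓ by ε and decreasing α_{ℓ+1} by
    ε·(1 - 1/(n-ℓ+1)) preserves feasibility and raises the objective
    by exactly ε/(n-ℓ+1). -/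
theorem stmt_11 (n ℓ : ℕ) (hn : 1 ≤ n) (hℓ1 : 1 ≤ ℓ) (hℓn : ℓ < n)
    (α δ : ℕ → ℝ) (hδ1 : δ 1 = n)
    (hrec : ∀ t, 1 ≤ t → t ≤ n →
      δ (t + 1) = (1 - 1 / ((n : ℝ) - t + 1)) * (δ t - α t))
    (hfeas : ∀ t, 1 ≤ t → t ≤ n → 0 ≤ α t ∧ α t ≤ min (δ t) 1)
    (hslack : α ℓ < min (δ ℓ) 1) (hpos : 0 < α (ℓ + 1))
    (ε : ℝ)
    (hε : ε = min (min (δ ℓ) 1 - α ℓ)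
      (α (ℓ + 1) / (1 - 1 / ((n : ℝ) - ℓ + 1))))
    (α' : ℕ → ℝ)
    (hα' : α' = fun t => if t = ℓ then α ℓ + ε
      else if t = ℓ + 1 then α (ℓ + 1) - ε * (1 - 1 / ((n : ℝ) - ℓ + 1))
      else α t)
    (δ' : ℕ → ℝ) (hδ'1 : δ' 1 = n)
    (hrec' : ∀ t, 1 ≤ t → t ≤ n →
      δ' (t + 1) = (1 - 1 / ((n : ℝ) - t + 1)) * (δ' t - α' t)) :
    (∀ t, 1 ≤ t → t ≤ n → 0 ≤ α' t ∧ α' t ≤ min (δ' t) 1) ∧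
    ∑ t ∈ Finset.Icc 1 n, α' t =
      (∑ t ∈ Finset.Icc 1 n, α t) + ε / ((n : ℝ) - ℓ + 1) :=
  stmt_11_general n ℓ hℓ1 hℓn α δ hδ1 hrec hfeas ε hε α' hα' δ' hδ'1 hrec'
end

section
/- Let δ*₁ = n and δ*_{t+1} = (1 - 1/(n-t+1))·(δ*_t - 1) for t ∈ [n]. If t* = ⌈(1-1/e)n + 2 - 1/e⌉ satisfies t* ≤ n, then δ*_{t*} ≤ 0. -/
/-!
With `m = n + 1 - t`, the closed form `δ t = m (1 - ∑_{ℓ = m + 1}^{n} 1 / ℓ)` and the comparison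
of the harmonic sum with `∫ dx / x` suggest `δ t ≤ logBound (n + 1) m`. This bound
survives one step of the recursion because `log (m + 1) - log m ≤ 1 / m`, so it follows by
induction without the closed form. At `t*` one has `(m + 1) e ≤ n + 1`, so the logarithm is
at least `1` and the bound is nonpositive.
-/

open Real

lemma log_add_one_sub_log_le {m : ℝ} (hm : 0 < m) : log (m + 1) - log m ≤ 1 / m := by
  have h := log_le_sub_one_of_pos (div_pos (by linarith : 0 < m + 1) hm)
  rwa [log_div (by linarith) hm.ne', add_div, div_self hm.ne', add_sub_cancel_left] at h

noncomputable def logBound (N m : ℝ) : ℝ := m * (1 - log (N / (m + 1)))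

lemma logBound_step {N m d : ℝ} (hN : 0 < N) (hm : 1 ≤ m) (hd : d ≤ logBound N m) :
    (1 - 1 / m) * (d - 1) ≤ logBound N (m - 1) := by
  rw [logBound, sub_add_cancel]
  rw [logBound] at hd
  have hm0 : 0 < m := by linarith
  have hlog := log_add_one_sub_log_le hm0
  have hfac : 0 ≤ 1 - 1 / m := sub_nonneg.mpr ((div_le_one hm0).mpr hm)
  rw [log_div hN.ne' (by linarith)] at hd
  rw [log_div hN.ne' hm0.ne']
  calc (1 - 1 / m) * (d - 1)
      ≤ (1 - 1 / m) * (m * (1 - (log N - log (m + 1))) - 1) := by gcongr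
    _ = (m - 1) * (1 - log N + log (m + 1) - 1 / m) := by field_simp; ring
    _ ≤ (m - 1) * (1 - (log N - log m)) :=
      mul_le_mul_of_nonneg_left (by linarith) (by linarith)

lemma logBound_nonpos {N m : ℝ} (hm : 0 ≤ m) (hN : (m + 1) * exp 1 ≤ N) :
    logBound N m ≤ 0 := by
  have hN0 : 0 < N := lt_of_lt_of_le (by positivity) hN
  have hlog : 1 ≤ log (N / (m + 1)) := by
    rw [le_log_iff_exp_le (by positivity), le_div_iff₀ (by linarith)]
    linarith
  exact mul_nonpos_of_nonneg_of_nonpos hm (by linarith)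

lemma le_logBound_of_rec (n : ℕ) (δ : ℕ → ℝ) (hδ1 : δ 1 = n)
    (hrec : ∀ t, 1 ≤ t → t ≤ n →
      δ (t + 1) = (1 - 1 / ((n : ℝ) - t + 1)) * (δ t - 1))
    {t : ℕ} (ht : 1 ≤ t) (htn : t ≤ n + 1) :
    δ t ≤ logBound (n + 1) (n + 1 - t) := by
  induction t, ht using Nat.le_induction with
  | base =>
    rw [hδ1, logBound]
    push_cast
    rw [add_sub_cancel_right, div_self (by positivity), log_one]
    simp
  | succ t ht ih =>
    have hle : (t : ℝ) + 1 ≤ n + 1 := by exact_mod_cast htn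
    have hstep := logBound_step (by positivity : (0 : ℝ) < n + 1)
      (by linarith : (1 : ℝ) ≤ n + 1 - t) (ih (by omega))
    rw [hrec t ht (by omega)]
    have hm : (n : ℝ) - t + 1 = n + 1 - t := by ring
    have hm' : (n : ℝ) + 1 - (t + 1 : ℕ) = n + 1 - t - 1 := by push_cast; ring
    rwa [hm, hm']

theorem stmt_12_general (n : ℕ) (δ : ℕ → ℝ)
    (hδ1 : δ 1 = n)
    (hrec : ∀ t, 1 ≤ t → t ≤ n →
      δ (t + 1) = (1 - 1 / ((n : ℝ) - t + 1)) * (δ t - 1))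
    (htstar : ⌈(1 - 1 / Real.exp 1) * n + 2 - 1 / Real.exp 1⌉₊ ≤ n) :
    δ ⌈(1 - 1 / Real.exp 1) * n + 2 - 1 / Real.exp 1⌉₊ ≤ 0 := by
  set T := ⌈(1 - 1 / exp 1) * n + 2 - 1 / exp 1⌉₊
  have hinv : 1 / exp 1 < 1 := by
    rw [div_lt_one (exp_pos 1)]; exact one_lt_exp_iff.mpr one_pos
  have hthreshold : (1 - 1 / exp 1) * n + 2 - 1 / exp 1 ≤ T := Nat.le_ceil _
  have hT1 : 1 ≤ T := Nat.one_le_ceil_iff.mpr (by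
    have : 0 ≤ (1 - 1 / exp 1) * n := mul_nonneg (by linarith) n.cast_nonneg
    linarith)
  have hTn : (T : ℝ) ≤ n := by exact_mod_cast htstar
  refine (le_logBound_of_rec n δ hδ1 hrec hT1 (by omega)).trans
    (logBound_nonpos (by linarith) ?_)
  have hgap : (n : ℝ) + 1 - T + 1 ≤ (n + 1) / exp 1 := by
    rw [div_eq_mul_one_div]; linarith
  exact (le_div_iff₀ (exp_pos 1)).mp hgap

/-- For δ*₁ = n, δ*_{t+1} = (1 - 1/(n-t+1))(δ*_t - 1): if
    t* = ⌈(1-1/e)n + 2 - 1/e⌉ satisfies t* ≤ n then δ*_{t*} ≤ 0. -/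
theorem stmt_12 (n : ℕ) (hn : 1 ≤ n) (δ : ℕ → ℝ)
    (hδ1 : δ 1 = n)
    (hrec : ∀ t, 1 ≤ t → t ≤ n →
      δ (t + 1) = (1 - 1 / ((n : ℝ) - t + 1)) * (δ t - 1))
    (htstar : ⌈(1 - 1 / Real.exp 1) * n + 2 - 1 / Real.exp 1⌉₊ ≤ n) :
    δ ⌈(1 - 1 / Real.exp 1) * n + 2 - 1 / Real.exp 1⌉₊ ≤ 0 :=
  stmt_12_general n δ hδ1 hrec htstar
end

section
/- The optimal value of the LP — maximize ∑_{t=1}^{n} α_t subject to δ₁ = n, δ_{t+1} = (1 - 1/(n-t+1))(δ_t - α_t), 0 ≤ α_t ≤ min(δ_t, 1) — is at most ⌈(1-1/e)·n + 2 - 1/e⌉. -/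
/-!
Along an LP solution the normalised residual `δ_t / (n - t + 1)` drops by exactly
`α_t / (n - t + 1)` per step, starting from `1`, and `α_n ≤ δ_n` keeps it nonnegative; so every
feasible `α` satisfies the knapsack constraint `∑ α_t / (n - t + 1) ≤ 1` with `0 ≤ α_t ≤ 1`.
Weak duality with multiplier `m` on that constraint bounds `∑ α_t` by
`m + ∑_{j = m+1}^{n} (1 - m / j) ≤ n - m log ((n + 1) / (m + 1))`, and the choice
`m = ⌊(n + 1) / e⌋` makes `m log ((n + 1) / (m + 1)) ≥ (n + 1) / e - 2`.
-/

open Finset Real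

/-- Weak LP duality: `c` is the multiplier of the budget row, `max 0 (1 - c / d i)` that of
`β i ≤ 1`. -/
theorem sum_le_add_sum_max_zero_one_sub_div {ι : Type*} (s : Finset ι) {β d : ι → ℝ}
    (hβ0 : ∀ i ∈ s, 0 ≤ β i) (hβ1 : ∀ i ∈ s, β i ≤ 1) (hbudget : ∑ i ∈ s, β i / d i ≤ 1)
    {c : ℝ} (hc : 0 ≤ c) :
    ∑ i ∈ s, β i ≤ c + ∑ i ∈ s, max 0 (1 - c / d i) := by
  have hpoint : ∀ i ∈ s, β i ≤ c * (β i / d i) + max 0 (1 - c / d i) := by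
    intro i hi
    have hsplit : β i = c * (β i / d i) + β i * (1 - c / d i) := by ring
    have hrest : β i * (1 - c / d i) ≤ max 0 (1 - c / d i) := by
      rcases le_total 0 (1 - c / d i) with h | h
      · exact (mul_le_of_le_one_left h (hβ1 i hi)).trans (le_max_right _ _)
      · exact (mul_nonpos_of_nonneg_of_nonpos (hβ0 i hi) h).trans (le_max_left _ _)
    linarith
  calc ∑ i ∈ s, β i ≤ ∑ i ∈ s, (c * (β i / d i) + max 0 (1 - c / d i)) := sum_le_sum hpoint
    _ = c * ∑ i ∈ s, β i / d i + ∑ i ∈ s, max 0 (1 - c / d i) := by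
      rw [sum_add_distrib, mul_sum]
    _ ≤ c + ∑ i ∈ s, max 0 (1 - c / d i) := by gcongr; exact mul_le_of_le_one_right hc hbudget

theorem log_div_le_sum_Ico_inv {m n : ℕ} (hmn : m ≤ n) :
    log ((n + 1 : ℝ) / (m + 1)) ≤ ∑ j ∈ Ico (m + 1) (n + 1), (j : ℝ)⁻¹ := by
  have h0 : (0 : ℝ) ∉ Set.uIcc ((m + 1 : ℕ) : ℝ) ((n + 1 : ℕ) : ℝ) := by
    rw [Set.uIcc_of_le (by gcongr)]
    simp only [Set.mem_Icc, not_and, not_le]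
    intro h; push_cast at h; linarith
  calc log ((n + 1 : ℝ) / (m + 1)) = ∫ x in ((m + 1 : ℕ) : ℝ)..((n + 1 : ℕ) : ℝ), x⁻¹ := by
        rw [integral_inv h0, Nat.cast_succ, Nat.cast_succ]
    _ ≤ ∑ j ∈ Ico (m + 1) (n + 1), (j : ℝ)⁻¹ :=
        (inv_antitoneOn_Icc_right (by positivity)).integral_le_sum_Ico (by omega)

theorem sum_Icc_max_zero_one_sub_div_le {m n : ℕ} (hmn : m ≤ n) :
    ∑ j ∈ Icc 1 n, max 0 (1 - m / (j : ℝ)) ≤ (n - m) - m * log ((n + 1 : ℝ) / (m + 1)) := by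
  rw [← Ico_add_one_right_eq_Icc, ← sum_Ico_consecutive _ (by omega : 1 ≤ m + 1)
    (by omega : m + 1 ≤ n + 1)]
  have hlow : ∑ j ∈ Ico 1 (m + 1), max 0 (1 - m / (j : ℝ)) = 0 := by
    refine sum_eq_zero fun j hj => max_eq_left ?_
    obtain ⟨hj1, hjm⟩ := mem_Ico.mp hj
    rw [sub_nonpos, le_div_iff₀ (by positivity)]
    exact_mod_cast (by omega : 1 * j ≤ m)
  have hhigh : ∑ j ∈ Ico (m + 1) (n + 1), max 0 (1 - m / (j : ℝ))
      = (n - m) - m * ∑ j ∈ Ico (m + 1) (n + 1), (j : ℝ)⁻¹ := by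
    have hterm : ∀ j ∈ Ico (m + 1) (n + 1), max 0 (1 - m / (j : ℝ)) = 1 - m * (j : ℝ)⁻¹ := by
      intro j hj
      obtain ⟨hmj, -⟩ := mem_Ico.mp hj
      rw [max_eq_right, div_eq_mul_inv]
      rw [sub_nonneg, div_le_one (by exact_mod_cast (by omega : 0 < j))]
      exact_mod_cast (by omega : m ≤ j)
    rw [sum_congr rfl hterm, sum_sub_distrib, sum_const, Nat.card_Ico, mul_sum, nsmul_one,
      Nat.cast_sub (by omega)]
    push_cast
    ring
  rw [hlow, hhigh, zero_add]
  gcongr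
  exact log_div_le_sum_Ico_inv hmn

theorem sum_Icc_comp_sub_add_one (n : ℕ) (g : ℝ → ℝ) :
    ∑ t ∈ Icc 1 n, g ((n : ℝ) - t + 1) = ∑ j ∈ Icc 1 n, g j := by
  refine sum_nbij' (fun t => n + 1 - t) (fun j => n + 1 - j) ?_ ?_ ?_ ?_ ?_ <;> intro t ht <;>
    rw [mem_Icc] at ht
  · exact mem_Icc.mpr (by omega)
  · exact mem_Icc.mpr (by omega)
  · omega
  · omega
  · rw [Nat.cast_sub (by omega), Nat.cast_succ]
    congr 1
    ring

theorem sub_two_le_floor_mul_log (x : ℝ) :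
    x / exp 1 - 2 ≤ ⌊x / exp 1⌋₊ * log (x / (⌊x / exp 1⌋₊ + 1)) := by
  set r := x / exp 1 with hr
  set m := ⌊r⌋₊
  rcases lt_or_ge r 1 with hr1 | hr1
  · rw [show m = 0 from Nat.floor_eq_zero.mpr hr1]
    simp only [CharP.cast_eq_zero, zero_mul]
    linarith
  have hr0 : 0 < r := by linarith
  have hx : x = exp 1 * r := by rw [hr]; field_simp
  have hm : r - 1 ≤ m := by linarith [Nat.lt_floor_add_one r]
  have hlog : 1 - r⁻¹ ≤ log (x / (m + 1)) :=
    calc 1 - r⁻¹ = 1 + (1 - ((r + 1) / r)) := by field_simp; ring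
      _ ≤ 1 + log (r / (r + 1)) := by
        gcongr
        simpa using one_sub_inv_le_log_of_pos (by positivity : 0 < r / (r + 1))
      _ = log (x / (r + 1)) := by
        rw [hx, mul_div_assoc, log_mul (exp_pos 1).ne' (by positivity), log_exp]
      _ ≤ log (x / (m + 1)) := by
        have hx0 : 0 < x := by rw [hx]; positivity
        gcongr
        exact Nat.floor_le hr0.le
  have hinv : r⁻¹ ≤ 1 := inv_le_one_of_one_le₀ hr1
  calc r - 2 ≤ r - 2 + r⁻¹ := by linarith [inv_pos.mpr hr0]
    _ = (r - 1) * (1 - r⁻¹) := by field_simp; ring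
    _ ≤ m * (1 - r⁻¹) := by gcongr
    _ ≤ m * log (x / (m + 1)) := by gcongr

theorem residual_eq_mul_one_sub_sum {n : ℕ} {α δ : ℕ → ℝ} (hδ1 : δ 1 = n)
    (hrec : ∀ t, 1 ≤ t → t ≤ n → δ (t + 1) = (1 - 1 / ((n : ℝ) - t + 1)) * (δ t - α t))
    {j : ℕ} (hj : j ≤ n) :
    δ (j + 1) = ((n : ℝ) - j) * (1 - ∑ t ∈ Icc 1 j, α t / ((n : ℝ) - t + 1)) := by
  induction j with
  | zero => simp [hδ1]
  | succ j ih =>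
    have hpos : (n : ℝ) - j ≠ 0 := by
      have : (j : ℝ) + 1 ≤ n := by exact_mod_cast hj
      linarith
    rw [hrec (j + 1) (by omega) hj, ih (by omega), sum_Icc_succ_top (by omega)]
    push_cast
    rw [show (n : ℝ) - (j + 1) + 1 = n - j by ring]
    field_simp
    ring

theorem sum_div_sub_add_one_le_one {n : ℕ} {α δ : ℕ → ℝ} (hδ1 : δ 1 = n)
    (hrec : ∀ t, 1 ≤ t → t ≤ n → δ (t + 1) = (1 - 1 / ((n : ℝ) - t + 1)) * (δ t - α t))
    (hαδ : ∀ t, 1 ≤ t → t ≤ n → α t ≤ δ t) :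
    ∑ t ∈ Icc 1 n, α t / ((n : ℝ) - t + 1) ≤ 1 := by
  cases n with
  | zero => simp
  | succ p =>
    have hlast := hαδ (p + 1) le_add_self le_rfl
    rw [residual_eq_mul_one_sub_sum hδ1 hrec le_self_add] at hlast
    rw [sum_Icc_succ_top (by omega)]
    push_cast at hlast ⊢
    simp only [add_sub_cancel_left, one_mul, sub_self, zero_add, div_one] at hlast ⊢
    linarith

theorem stmt_16_general (n : ℕ) (α δ : ℕ → ℝ)
    (hδ1 : δ 1 = n)
    (hrec : ∀ t, 1 ≤ t → t ≤ n →
      δ (t + 1) = (1 - 1 / ((n : ℝ) - t + 1)) * (δ t - α t))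
    (hfeas : ∀ t, 1 ≤ t → t ≤ n → 0 ≤ α t ∧ α t ≤ min (δ t) 1) :
    ∑ t ∈ Finset.Icc 1 n, α t ≤
      (⌈(1 - 1 / Real.exp 1) * n + 2 - 1 / Real.exp 1⌉₊ : ℝ) := by
  have hbudget := sum_div_sub_add_one_le_one hδ1 hrec fun t h1 h2 => (hfeas t h1 h2).2.trans (min_le_left _ _)
  have hα0 : ∀ t ∈ Icc 1 n, 0 ≤ α t := fun t ht => (hfeas t (mem_Icc.mp ht).1 (mem_Icc.mp ht).2).1
  have hα1 : ∀ t ∈ Icc 1 n, α t ≤ 1 := fun t ht =>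
    (hfeas t (mem_Icc.mp ht).1 (mem_Icc.mp ht).2).2.trans (min_le_right _ _)
  set m := ⌊(n + 1 : ℝ) / exp 1⌋₊
  have hmn : m ≤ n := by
    rw [← Nat.lt_succ_iff, Nat.floor_lt (by positivity), Nat.cast_succ]
    exact div_lt_self (by positivity) (one_lt_exp_iff.mpr one_pos)
  calc ∑ t ∈ Icc 1 n, α t ≤ m + ∑ t ∈ Icc 1 n, max 0 (1 - m / ((n : ℝ) - t + 1)) :=
        sum_le_add_sum_max_zero_one_sub_div _ hα0 hα1 hbudget m.cast_nonneg
    _ = m + ∑ j ∈ Icc 1 n, max 0 (1 - m / (j : ℝ)) := by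
      rw [sum_Icc_comp_sub_add_one n fun x => max 0 (1 - m / x)]
    _ ≤ m + ((n - m) - m * log ((n + 1 : ℝ) / (m + 1))) := by
      gcongr
      exact sum_Icc_max_zero_one_sub_div_le hmn
    _ ≤ n - ((n + 1 : ℝ) / exp 1 - 2) := by linarith [sub_two_le_floor_mul_log (n + 1 : ℝ)]
    _ = (1 - 1 / exp 1) * n + 2 - 1 / exp 1 := by ring
    _ ≤ _ := Nat.le_ceil _

/-- The optimal value of the factor-revealing LP is at most
    ⌈(1-1/e)·n + 2 - 1/e⌉. -/
theorem stmt_16 (n : ℕ) (hn : 1 ≤ n) (α δ : ℕ → ℝ)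
    (hδ1 : δ 1 = n)
    (hrec : ∀ t, 1 ≤ t → t ≤ n →
      δ (t + 1) = (1 - 1 / ((n : ℝ) - t + 1)) * (δ t - α t))
    (hfeas : ∀ t, 1 ≤ t → t ≤ n → 0 ≤ α t ∧ α t ≤ min (δ t) 1) :
    ∑ t ∈ Finset.Icc 1 n, α t ≤
      (⌈(1 - 1 / Real.exp 1) * n + 2 - 1 / Real.exp 1⌉₊ : ℝ) :=
  stmt_16_general n α δ hδ1 hrec hfeas
end
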